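/- arXiv:2308.10697 — 2 statements merged into one kernel-verified Lean document; each statement's English description precedes it below -/
import Mathlib

section
/- Let Y be a real-valued random variable with E[Y] = 0 and suppose that for some b > 0, E[exp(b Y²)] ≤ 2. Then for all λ ≥ 0, E[exp(λY)] ≤ exp(3λ²/(2b)). -/
/-!
Write `s = λ² / b`. If `s ≤ 1`, the pointwise bound `eˣ ≤ x + e^{x²}` with `x = λY`, followed by
convexity of `exp` on `[0, b Y²]` (`e^{s u} ≤ 1 - s + s eᵘ`), gives after integration
`E[e^{λY}] ≤ 1 + s (E[e^{bY²}] - 1) ≤ 1 + s ≤ eˢ`, the linear term vanishing since `E[Y] = 0`.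
If `s ≥ 1`, Young's inequality `λY ≤ s/2 + bY²/2` and `e^{u/2} ≤ (1 + eᵘ)/2` give
`E[e^{λY}] ≤ e^{s/2} (1 + E[e^{bY²}])/2 ≤ (3/2) e^{s/2} ≤ e^{3s/2}`.
-/

open MeasureTheory Real

namespace Real

lemma exp_le_add_exp_sq (x : ℝ) : exp x ≤ x + exp (x ^ 2) := by
  have h_sq : 1 + x ^ 2 ≤ exp (x ^ 2) := by linarith [add_one_le_exp (x ^ 2)]
  rcases le_or_gt |x| 1 with hx | hx
  · linarith [(abs_le.1 (abs_exp_sub_one_sub_id_le hx)).2]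
  rcases lt_abs.1 hx with hx | hx
  · linarith [exp_le_exp.2 (show x ≤ x ^ 2 by nlinarith)]
  · have : exp x ≤ 1 := exp_le_one_iff.2 (by linarith)
    nlinarith

lemma exp_mul_le_one_sub_add_mul_exp {t : ℝ} (ht₀ : 0 ≤ t) (ht₁ : t ≤ 1) (u : ℝ) :
    exp (t * u) ≤ 1 - t + t * exp u := by
  have h := convexOn_exp.2 (Set.mem_univ 0) (Set.mem_univ u) (sub_nonneg.2 ht₁) ht₀
    (sub_add_cancel 1 t)
  simpa only [smul_eq_mul, mul_zero, zero_add, exp_zero, mul_one] using h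

lemma exp_mul_le_exp_sq_div_mul_one_add_exp_div_two {b : ℝ} (hb : 0 < b) (l x : ℝ) :
    exp (l * x) ≤ exp (l ^ 2 / (2 * b)) * ((1 + exp (b * x ^ 2)) / 2) := by
  have h_young : l * x ≤ l ^ 2 / (2 * b) + 2⁻¹ * (b * x ^ 2) := by
    have : 0 ≤ (l - b * x) ^ 2 / (2 * b) := by positivity
    rw [sub_sq] at this
    field_simp at this ⊢
    nlinarith
  calc exp (l * x) ≤ exp (l ^ 2 / (2 * b)) * exp (2⁻¹ * (b * x ^ 2)) := by
        rw [← exp_add]; exact exp_le_exp.2 h_young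
    _ ≤ exp (l ^ 2 / (2 * b)) * ((1 + exp (b * x ^ 2)) / 2) := by
        gcongr
        linarith [exp_mul_le_one_sub_add_mul_exp (by norm_num : (0 : ℝ) ≤ 2⁻¹) (by norm_num)
          (b * x ^ 2)]

end Real

section

variable {Ω : Type*} [MeasurableSpace Ω] {μ : Measure Ω} [IsProbabilityMeasure μ]
  {Y : Ω → ℝ} {b : ℝ}

lemma integral_exp_mul_le_one_add_of_sq_le (hYint : Integrable Y μ) (hY0 : ∫ w, Y w ∂μ = 0)
    (hb : 0 < b) (hint : Integrable (fun w => exp (b * Y w ^ 2)) μ) {l : ℝ} (hl : l ^ 2 ≤ b) :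
    ∫ w, exp (l * Y w) ∂μ ≤ 1 + l ^ 2 / b * (∫ w, exp (b * Y w ^ 2) ∂μ - 1) := by
  set s := l ^ 2 / b
  have hs₀ : 0 ≤ s := by positivity
  have hs₁ : s ≤ 1 := (div_le_one hb).2 hl
  have h_pointwise (w : Ω) : exp (l * Y w) ≤ l * Y w + (1 - s + s * exp (b * Y w ^ 2)) := by
    have h_sq : (l * Y w) ^ 2 = s * (b * Y w ^ 2) := by
      simp only [s]; field_simp
    have := exp_le_add_exp_sq (l * Y w)
    rw [h_sq] at this
    linarith [exp_mul_le_one_sub_add_mul_exp hs₀ hs₁ (b * Y w ^ 2)]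
  have h_int : Integrable (fun w => 1 - s + s * exp (b * Y w ^ 2)) μ :=
    (integrable_const _).add (hint.const_mul s)
  calc ∫ w, exp (l * Y w) ∂μ ≤ ∫ w, l * Y w + (1 - s + s * exp (b * Y w ^ 2)) ∂μ :=
        integral_mono_of_nonneg (.of_forall fun w => (exp_pos _).le)
          ((hYint.const_mul l).add h_int) (.of_forall h_pointwise)
    _ = 1 + s * (∫ w, exp (b * Y w ^ 2) ∂μ - 1) := by
        rw [integral_add (hYint.const_mul l) h_int, integral_add (integrable_const _)
          (hint.const_mul s), integral_const_mul, integral_const_mul, hY0, integral_const,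
          probReal_univ, one_smul]
        ring

lemma integral_exp_mul_le_exp_sq_div_mul (hb : 0 < b)
    (hint : Integrable (fun w => exp (b * Y w ^ 2)) μ) (l : ℝ) :
    ∫ w, exp (l * Y w) ∂μ ≤ exp (l ^ 2 / (2 * b)) * ((1 + ∫ w, exp (b * Y w ^ 2) ∂μ) / 2) := by
  have h_int : Integrable (fun w => exp (l ^ 2 / (2 * b)) * ((1 + exp (b * Y w ^ 2)) / 2)) μ :=
    (((integrable_const 1).add hint).div_const 2).const_mul _
  calc ∫ w, exp (l * Y w) ∂μ
      ≤ ∫ w, exp (l ^ 2 / (2 * b)) * ((1 + exp (b * Y w ^ 2)) / 2) ∂μ :=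
        integral_mono_of_nonneg (.of_forall fun w => (exp_pos _).le) h_int
          (.of_forall fun w => exp_mul_le_exp_sq_div_mul_one_add_exp_div_two hb l (Y w))
    _ = exp (l ^ 2 / (2 * b)) * ((1 + ∫ w, exp (b * Y w ^ 2) ∂μ) / 2) := by
        rw [integral_const_mul, integral_div, integral_add (integrable_const 1) hint,
          integral_const, probReal_univ, one_smul]

end

/-- **Sub-Gaussian moment generating function bound.**  If `Y` is a centered real random
variable with `E[exp(b Y²)] ≤ 2` for some `b > 0`, then `E[exp(λY)] ≤ exp(3λ²/(2b))` for
all `λ ≥ 0`. -/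
theorem subgaussian_mgf_bound
    {Ω' : Type*} [MeasurableSpace Ω'] (μ : Measure Ω') [IsProbabilityMeasure μ]
    (Y : Ω' → ℝ) (hYint : Integrable Y μ) (hY0 : (∫ w, Y w ∂μ) = 0)
    (b : ℝ) (hb : 0 < b)
    (hint : Integrable (fun w => Real.exp (b * Y w ^ 2)) μ)
    (hsg : (∫ w, Real.exp (b * Y w ^ 2) ∂μ) ≤ 2) :
    ∀ l : ℝ, 0 ≤ l → (∫ w, Real.exp (l * Y w) ∂μ) ≤ Real.exp (3 * l ^ 2 / (2 * b)) := by
  intro l _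
  have h_split : 3 * l ^ 2 / (2 * b) = l ^ 2 / (2 * b) + l ^ 2 / b := by field_simp; ring
  rcases le_total (l ^ 2) b with hl | hl
  · calc ∫ w, exp (l * Y w) ∂μ ≤ 1 + l ^ 2 / b * (∫ w, exp (b * Y w ^ 2) ∂μ - 1) :=
          integral_exp_mul_le_one_add_of_sq_le hYint hY0 hb hint hl
      _ ≤ 1 + l ^ 2 / b := by
          gcongr 1 + ?_
          exact mul_le_of_le_one_right (by positivity) (by linarith)
      _ ≤ exp (l ^ 2 / b) := by linarith [add_one_le_exp (l ^ 2 / b)]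
      _ ≤ exp (3 * l ^ 2 / (2 * b)) := by
          rw [h_split]
          exact exp_le_exp.2 (le_add_of_nonneg_left (by positivity))
  · have h_one : 1 ≤ l ^ 2 / b := (one_le_div hb).2 hl
    calc ∫ w, exp (l * Y w) ∂μ
        ≤ exp (l ^ 2 / (2 * b)) * ((1 + ∫ w, exp (b * Y w ^ 2) ∂μ) / 2) :=
          integral_exp_mul_le_exp_sq_div_mul hb hint l
      _ ≤ exp (l ^ 2 / (2 * b)) * exp (l ^ 2 / b) := by
          gcongr
          linarith [add_one_le_exp (l ^ 2 / b)]
      _ = exp (3 * l ^ 2 / (2 * b)) := by rw [h_split, exp_add]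
end

section
/- Let (λ, g) with g = Ψ𝐠 ∈ V_N, and define the variance-residual [res^var(λ,g)]² = (𝐠*[L − λA* − conj(λ)A + |λ|²G]𝐠)/(𝐠*G𝐠), where G_{ij} = ⟨ψ_j,ψ_i⟩, A_{ij} = ⟨K[ψ_j],ψ_i⟩, and L_{ij} = ∫_Ω E_τ[ψ_j(F(x,τ)) conj(ψ_i(F(x,τ)))] dω(x). Then 𝐠*[L − λA* − conj(λ)A + |λ|²G]𝐠 = E_τ[‖g∘F_τ − λg‖²] = ‖K[g] − λg‖² + ∫_Ω Var_τ[g(F(x,τ))] dω(x). In particular [res^var(λ,g)]² ≥ ‖K[g]−λg‖²/‖g‖², with equality iff the integrated variance of g∘F_τ vanishes. -/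
/-!
The matrix `L - λA* - conj(λ)A + |λ|²G` is the Gram matrix, in `L²(ω ⊗ ρ)`, of the functions
`(x, τ) ↦ ψⱼ(F(x, τ)) - λψⱼ(x)`: expanding the inner products sesquilinearly and integrating out
`τ` by Fubini recovers `L`, `A`, `A*` and `G`. Its quadratic form at `𝐠` is therefore
`‖g ∘ F - λg‖²` in `L²(ω ⊗ ρ)`. Integrating first over each fibre `{x} × Ωs` and using there the
bias–variance identity `E‖f - b‖² = (E‖f‖² - ‖Ef‖²) + ‖Ef - b‖²` with `b = λg(x)` gives the
decomposition; the fibrewise variance is nonnegative, which yields the inequality and its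
equality case.
-/

open MeasureTheory Matrix ComplexConjugate

section BiasVariance

variable {β E : Type*} [MeasurableSpace β] {ρ : Measure β} [IsProbabilityMeasure ρ]
  [NormedAddCommGroup E] [InnerProductSpace ℝ E] [CompleteSpace E]

theorem integral_norm_sub_sq {f : β → E} (hf : MemLp f 2 ρ) (b : E) :
    ∫ τ, ‖f τ - b‖ ^ 2 ∂ρ
      = (∫ τ, ‖f τ‖ ^ 2 ∂ρ - ‖∫ τ, f τ ∂ρ‖ ^ 2) + ‖(∫ τ, f τ ∂ρ) - b‖ ^ 2 := by
  have hsq : Integrable (fun τ => ‖f τ‖ ^ 2) ρ := hf.integrable_norm_pow two_ne_zero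
  have hinner : Integrable (fun τ => 2 * inner ℝ b (f τ)) ρ :=
    ((hf.integrable one_le_two).const_inner b).const_mul 2
  have hdiff : Integrable (fun τ => ‖f τ‖ ^ 2 - 2 * inner ℝ b (f τ)) ρ := hsq.sub hinner
  simp_rw [norm_sub_sq_real, real_inner_comm b]
  rw [integral_add hdiff (integrable_const _), integral_sub hsq hinner,
    integral_const_mul, integral_inner (hf.integrable one_le_two), integral_const, probReal_univ,
    one_smul]
  ring

theorem sq_norm_integral_le_integral_sq_norm {f : β → E} (hf : MemLp f 2 ρ) :
    ‖∫ τ, f τ ∂ρ‖ ^ 2 ≤ ∫ τ, ‖f τ‖ ^ 2 ∂ρ := by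
  have h := integral_norm_sub_sq hf (∫ τ, f τ ∂ρ)
  rw [sub_self, norm_zero, zero_pow two_ne_zero, add_zero] at h
  rw [← sub_nonneg, ← h]
  exact integral_nonneg fun τ => sq_nonneg _

end BiasVariance

namespace MeasureTheory

variable {α β : Type*} [MeasurableSpace α] [MeasurableSpace β] {μ : Measure α} {ρ : Measure β}

section Fiberwise

variable {E : Type*} [NormedAddCommGroup E]

theorem MemLp.ae_memLp_prodMk [SFinite μ] [SFinite ρ] {f : α × β → E}
    (hf : MemLp f 2 (μ.prod ρ)) : ∀ᵐ x ∂μ, MemLp (fun τ => f (x, τ)) 2 ρ := by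
  filter_upwards [(hf.integrable_norm_pow two_ne_zero).prod_right_ae, hf.1.prodMk_left]
    with x hsq hmeas
  exact (memLp_two_iff_integrable_sq_norm hmeas).2 hsq

variable [InnerProductSpace ℝ E] [CompleteSpace E] [SFinite μ] [IsProbabilityMeasure ρ]

theorem MemLp.integral_prod_left {f : α × β → E} (hf : MemLp f 2 (μ.prod ρ)) :
    MemLp (fun x => ∫ τ, f (x, τ) ∂ρ) 2 μ := by
  have hmeas : AEStronglyMeasurable (fun x => ∫ τ, f (x, τ) ∂ρ) μ := hf.1.integral_prod_right'
  rw [memLp_two_iff_integrable_sq_norm hmeas]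
  refine (hf.integrable_norm_pow two_ne_zero).integral_prod_left.mono'
    (hmeas.norm.pow 2) ?_
  filter_upwards [hf.ae_memLp_prodMk] with x hx
  rw [Real.norm_of_nonneg (sq_nonneg _)]
  exact sq_norm_integral_le_integral_sq_norm hx

theorem integral_prod_norm_sub_sq {f : α × β → E} (hf : MemLp f 2 (μ.prod ρ)) {h : α → E}
    (hh : MemLp h 2 μ) :
    ∫ p, ‖f p - h p.1‖ ^ 2 ∂μ.prod ρ
      = ∫ x, ‖(∫ τ, f (x, τ) ∂ρ) - h x‖ ^ 2 ∂μ
        + ∫ x, (∫ τ, ‖f (x, τ)‖ ^ 2 ∂ρ - ‖∫ τ, f (x, τ) ∂ρ‖ ^ 2) ∂μ := by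
  have hKf := hf.integral_prod_left
  have hbias : Integrable (fun x => ‖(∫ τ, f (x, τ) ∂ρ) - h x‖ ^ 2) μ :=
    (hKf.sub hh).integrable_norm_pow two_ne_zero
  have hvar : Integrable (fun x => ∫ τ, ‖f (x, τ)‖ ^ 2 ∂ρ - ‖∫ τ, f (x, τ) ∂ρ‖ ^ 2) μ :=
    (hf.integrable_norm_pow two_ne_zero).integral_prod_left.sub
      (hKf.integrable_norm_pow two_ne_zero)
  have hres : MemLp (fun p => f p - h p.1) 2 (μ.prod ρ) :=
    hf.sub (hh.comp_measurePreserving measurePreserving_fst)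
  rw [integral_prod _ (hres.integrable_norm_pow two_ne_zero), ← integral_add hbias hvar]
  refine integral_congr_ae ?_
  filter_upwards [hf.ae_memLp_prodMk] with x hx
  rw [integral_norm_sub_sq hx, add_comm]

theorem integral_variance_nonneg {f : α × β → E} (hf : MemLp f 2 (μ.prod ρ)) :
    0 ≤ ∫ x, (∫ τ, ‖f (x, τ)‖ ^ 2 ∂ρ - ‖∫ τ, f (x, τ) ∂ρ‖ ^ 2) ∂μ := by
  refine integral_nonneg_of_ae ?_
  filter_upwards [hf.ae_memLp_prodMk] with x hx
  exact sub_nonneg.2 (sq_norm_integral_le_integral_sq_norm hx)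

end Fiberwise

section L2

variable {𝕜 F : Type*} [RCLike 𝕜] [NormedAddCommGroup F] [InnerProductSpace 𝕜 F]

theorem L2.inner_toLp {f g : α → F} (hf : MemLp f 2 μ) (hg : MemLp g 2 μ) :
    inner 𝕜 (hf.toLp f) (hg.toLp g) = ∫ x, inner 𝕜 (f x) (g x) ∂μ := by
  rw [L2.inner_def]
  refine integral_congr_ae ?_
  filter_upwards [hf.coeFn_toLp, hg.coeFn_toLp] with x hfx hgx
  rw [hfx, hgx]

theorem L2.inner_self_eq_integral_norm_sq {w : Lp F 2 μ} {h : α → F} (hw : w =ᵐ[μ] h) :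
    inner 𝕜 w w = ((∫ x, ‖h x‖ ^ 2 ∂μ : ℝ) : 𝕜) := by
  rw [L2.inner_def, ← integral_ofReal]
  refine integral_congr_ae ?_
  filter_upwards [hw] with x hx
  rw [hx, inner_self_eq_norm_sq_to_K, RCLike.ofReal_pow]

end L2

theorem integral_prod_mul_fst {𝕜 : Type*} [RCLike 𝕜] [SFinite μ] [SFinite ρ] {u : α × β → 𝕜}
    {w : α → 𝕜} (h : Integrable (fun p => u p * w p.1) (μ.prod ρ)) :
    ∫ p, u p * w p.1 ∂μ.prod ρ = ∫ x, (∫ τ, u (x, τ) ∂ρ) * w x ∂μ := by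
  rw [integral_prod _ h]
  simp_rw [integral_mul_const]

end MeasureTheory

theorem star_dotProduct_residualMatrix_mulVec {Ω Ωs ι : Type*} [MeasurableSpace Ω]
    [MeasurableSpace Ωs] [Fintype ι] {ω : Measure Ω} {ρ : Measure Ωs} [IsProbabilityMeasure ρ]
    [SigmaFinite ω] {F : Ω → Ωs → Ω} {ψ : ι → Ω → ℂ} (hψ : ∀ j, MemLp (ψ j) 2 ω)
    (hψF : ∀ j, MemLp (fun p : Ω × Ωs => ψ j (F p.1 p.2)) 2 (ω.prod ρ))
    {G A L : Matrix ι ι ℂ}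
    (hG : ∀ i j, G i j = ∫ x, ψ j x * conj (ψ i x) ∂ω)
    (hA : ∀ i j, A i j = ∫ x, (∫ τ, ψ j (F x τ) ∂ρ) * conj (ψ i x) ∂ω)
    (hL : ∀ i j, L i j = ∫ p, ψ j (F p.1 p.2) * conj (ψ i (F p.1 p.2)) ∂(ω.prod ρ))
    (c : ι → ℂ) (l : ℂ) :
    star c ⬝ᵥ (L - l • Aᴴ - conj l • A + ((‖l‖ ^ 2 : ℝ) : ℂ) • G) *ᵥ c
      = ((∫ p, ‖∑ j, c j * ψ j (F p.1 p.2) - l * ∑ j, c j * ψ j p.1‖ ^ 2 ∂(ω.prod ρ) : ℝ) : ℂ) := by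
  have hψfst : ∀ j, MemLp (fun p : Ω × Ωs => ψ j p.1) 2 (ω.prod ρ) :=
    fun j => (hψ j).comp_measurePreserving measurePreserving_fst
  have inner_fst : ∀ i {u : Ω × Ωs → ℂ} (hu : MemLp u 2 (ω.prod ρ)),
      inner ℂ ((hψfst i).toLp _) (hu.toLp u) = ∫ x, (∫ τ, u (x, τ) ∂ρ) * conj (ψ i x) ∂ω := by
    intro i u hu
    simp only [L2.inner_toLp, RCLike.inner_apply]
    have hconj : MemLp (fun p : Ω × Ωs => conj (ψ i p.1)) 2 (ω.prod ρ) := (hψfst i).star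
    exact integral_prod_mul_fst (w := fun x => conj (ψ i x)) (hu.integrable_mul hconj)
  set v : ι → Lp ℂ 2 (ω.prod ρ) := fun j => (hψF j).toLp _ - l • (hψfst j).toLp _
  have hgram : L - l • Aᴴ - conj l • A + ((‖l‖ ^ 2 : ℝ) : ℂ) • G = gram ℂ v := by
    ext i j
    simp only [gram_apply, v, inner_sub_left, inner_sub_right, inner_smul_left, inner_smul_right]
    -- `⟪ψᵢ ∘ F, ψⱼ⟫ = conj ⟪ψⱼ, ψᵢ ∘ F⟫ = conj (A j i)`, the entry of `Aᴴ`
    rw [← inner_conj_symm ((hψF i).toLp _) ((hψfst j).toLp _), inner_fst, inner_fst, inner_fst,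
      L2.inner_toLp]
    simp only [RCLike.inner_apply, integral_const, probReal_univ, one_smul]
    simp only [Matrix.add_apply, Matrix.sub_apply, Matrix.smul_apply, conjTranspose_apply, hL, hA, hG,
      smul_eq_mul, RCLike.star_def, Complex.ofReal_pow, ← Complex.conj_mul']
    ring
  have hv : ∀ j, v j =ᵐ[ω.prod ρ] fun p => ψ j (F p.1 p.2) - l * ψ j p.1 := fun j => by
    filter_upwards [Lp.coeFn_sub ((hψF j).toLp _) (l • (hψfst j).toLp _),
      Lp.coeFn_smul l ((hψfst j).toLp _), (hψF j).coeFn_toLp, (hψfst j).coeFn_toLp]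
      with p hsub hsmul hF hfst
    exact hsub.trans (by rw [Pi.sub_apply, hsmul, Pi.smul_apply, hF, hfst, smul_eq_mul])
  have hw : ⇑(∑ j, c j • v j) =ᵐ[ω.prod ρ]
      fun p => ∑ j, c j * ψ j (F p.1 p.2) - l * ∑ j, c j * ψ j p.1 := by
    filter_upwards [Lp.coeFn_fun_finsetSum Finset.univ (fun j => c j • v j),
      ae_all_iff.2 fun j => Lp.coeFn_smul (c j) (v j), ae_all_iff.2 hv] with p hsum hsmul hvp
    simp only [hsum, hsmul, hvp, Pi.smul_apply, smul_eq_mul, Finset.mul_sum,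
      ← Finset.sum_sub_distrib]
    exact Finset.sum_congr rfl fun j _ => by ring
  rw [hgram, star_dotProduct_gram_mulVec]
  exact L2.inner_self_eq_integral_norm_sq hw

theorem variance_residual_identity_general
    {Ω Ωs : Type*} [MeasurableSpace Ω] [MeasurableSpace Ωs]
    (ω : Measure Ω) (ρ : Measure Ωs) [IsProbabilityMeasure ρ] [SigmaFinite ω]
    (F : Ω → Ωs → Ω)
    {N : ℕ} (ψ : Fin N → Ω → ℂ)
    (hψ : ∀ j, MemLp (ψ j) 2 ω)
    (hψF : ∀ j, MemLp (fun p : Ω × Ωs => ψ j (F p.1 p.2)) 2 (ω.prod ρ))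
    (G A L : Matrix (Fin N) (Fin N) ℂ)
    (hG : ∀ i j, G i j = ∫ x, ψ j x * (starRingEnd ℂ) (ψ i x) ∂ω)
    (hA : ∀ i j, A i j = ∫ x, (∫ τ, ψ j (F x τ) ∂ρ) * (starRingEnd ℂ) (ψ i x) ∂ω)
    (hL : ∀ i j, L i j = ∫ p, ψ j (F p.1 p.2) * (starRingEnd ℂ) (ψ i (F p.1 p.2)) ∂(ω.prod ρ))
    (c : Fin N → ℂ) (l : ℂ) :
    let g : Ω → ℂ := fun x => ∑ j, c j * ψ j x
    let Kg : Ω → ℂ := fun x => ∫ τ, g (F x τ) ∂ρ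
    (star c ⬝ᵥ (L - l • Aᴴ - (starRingEnd ℂ l) • A + ((‖l‖ ^ 2 : ℝ) : ℂ) • G).mulVec c
        = ((∫ p, ‖g (F p.1 p.2) - l * g p.1‖ ^ 2 ∂(ω.prod ρ) : ℝ) : ℂ))
    ∧ ((∫ p, ‖g (F p.1 p.2) - l * g p.1‖ ^ 2 ∂(ω.prod ρ))
        = (∫ x, ‖Kg x - l * g x‖ ^ 2 ∂ω)
          + ∫ x, ((∫ τ, ‖g (F x τ)‖ ^ 2 ∂ρ) - ‖Kg x‖ ^ 2) ∂ω)
    ∧ ((∫ x, ‖Kg x - l * g x‖ ^ 2 ∂ω) / (∫ x, ‖g x‖ ^ 2 ∂ω)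
        ≤ (∫ p, ‖g (F p.1 p.2) - l * g p.1‖ ^ 2 ∂(ω.prod ρ)) / (∫ x, ‖g x‖ ^ 2 ∂ω))
    ∧ ((∫ p, ‖g (F p.1 p.2) - l * g p.1‖ ^ 2 ∂(ω.prod ρ))
          = (∫ x, ‖Kg x - l * g x‖ ^ 2 ∂ω)
        ↔ (∫ x, ((∫ τ, ‖g (F x τ)‖ ^ 2 ∂ρ) - ‖Kg x‖ ^ 2) ∂ω) = 0) := by
  intro g Kg
  have hg : MemLp g 2 ω := memLp_finsetSum _ fun j _ => (hψ j).const_mul (c j)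
  have hgF : MemLp (fun p : Ω × Ωs => g (F p.1 p.2)) 2 (ω.prod ρ) :=
    memLp_finsetSum _ fun j _ => (hψF j).const_mul (c j)
  have decomposition := integral_prod_norm_sub_sq hgF (hg.const_mul l)
  have variance_nonneg := integral_variance_nonneg hgF
  refine ⟨star_dotProduct_residualMatrix_mulVec hψ hψF hG hA hL c l, decomposition, ?_, ?_⟩
  · exact div_le_div_of_nonneg_right (by linarith) (integral_nonneg fun x => sq_nonneg _)
  · rw [decomposition, add_eq_left]

/-- **The variance-residual identity** (equations (22)–(24) of the paper).  For
`g = Ψ𝐠 ∈ V_N` and `λ ∈ ℂ`,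
`𝐠*[L − λA* − conj(λ)A + |λ|²G]𝐠 = E_τ[‖g∘F_τ − λg‖²]
  = ‖K[g] − λg‖² + ∫ Var_τ[g(F(x,τ))] dω(x)`,
so that `[res^var(λ,g)]² ≥ ‖K[g]−λg‖²/‖g‖²`, with equality iff the integrated variance
of `g∘F_τ` vanishes. -/
theorem variance_residual_identity
    {Ω Ωs : Type*} [MeasurableSpace Ω] [MeasurableSpace Ωs]
    (ω : Measure Ω) (ρ : Measure Ωs) [IsProbabilityMeasure ρ] [SigmaFinite ω]
    (F : Ω → Ωs → Ω) (hF : Measurable (Function.uncurry F))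
    {N : ℕ} (ψ : Fin N → Ω → ℂ) (hlin : LinearIndependent ℂ ψ)
    (hψ : ∀ j, MemLp (ψ j) 2 ω)
    (hψF : ∀ j, MemLp (fun p : Ω × Ωs => ψ j (F p.1 p.2)) 2 (ω.prod ρ))
    (G A L : Matrix (Fin N) (Fin N) ℂ)
    (hG : ∀ i j, G i j = ∫ x, ψ j x * (starRingEnd ℂ) (ψ i x) ∂ω)
    (hA : ∀ i j, A i j = ∫ x, (∫ τ, ψ j (F x τ) ∂ρ) * (starRingEnd ℂ) (ψ i x) ∂ω)
    (hL : ∀ i j, L i j = ∫ p, ψ j (F p.1 p.2) * (starRingEnd ℂ) (ψ i (F p.1 p.2)) ∂(ω.prod ρ))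
    (c : Fin N → ℂ) (l : ℂ) :
    let g : Ω → ℂ := fun x => ∑ j, c j * ψ j x
    let Kg : Ω → ℂ := fun x => ∫ τ, g (F x τ) ∂ρ
    (star c ⬝ᵥ (L - l • Aᴴ - (starRingEnd ℂ l) • A + ((‖l‖ ^ 2 : ℝ) : ℂ) • G).mulVec c
        = ((∫ p, ‖g (F p.1 p.2) - l * g p.1‖ ^ 2 ∂(ω.prod ρ) : ℝ) : ℂ))
    ∧ ((∫ p, ‖g (F p.1 p.2) - l * g p.1‖ ^ 2 ∂(ω.prod ρ))
        = (∫ x, ‖Kg x - l * g x‖ ^ 2 ∂ω)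
          + ∫ x, ((∫ τ, ‖g (F x τ)‖ ^ 2 ∂ρ) - ‖Kg x‖ ^ 2) ∂ω)
    ∧ ((∫ x, ‖Kg x - l * g x‖ ^ 2 ∂ω) / (∫ x, ‖g x‖ ^ 2 ∂ω)
        ≤ (∫ p, ‖g (F p.1 p.2) - l * g p.1‖ ^ 2 ∂(ω.prod ρ)) / (∫ x, ‖g x‖ ^ 2 ∂ω))
    ∧ ((∫ p, ‖g (F p.1 p.2) - l * g p.1‖ ^ 2 ∂(ω.prod ρ))
          = (∫ x, ‖Kg x - l * g x‖ ^ 2 ∂ω)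
        ↔ (∫ x, ((∫ τ, ‖g (F x τ)‖ ^ 2 ∂ρ) - ‖Kg x‖ ^ 2) ∂ω) = 0) :=
  variance_residual_identity_general ω ρ F ψ hψ hψF G A L hG hA hL c l
end
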